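/- For every ξ ∈ ℝ, the function g_ξ has a double critical point at ω = 1, i.e. g_ξ′(1) = 0 and g_ξ″(1) = 0, if and only if ξ = -(1/2)√(1+2c). -/

import Mathlib

/-- `c = a/(1+a²)`. -/
noncomputable def cOf (a : ℝ) : ℝ := a / (1 + a ^ 2)

/-- The branch of the logarithm with argument in `(-π/2, 3π/2]`:
`L(z) = Log(-iz) + iπ/2` where `Log` is the principal branch. -/
noncomputable def Lbr (z : ℂ) : ℂ :=
  Complex.log (-Complex.I * z) + Complex.I * ((Real.pi : ℂ) / 2)

/-- The branch `√(ω² + 2c) = exp((1/2)L(ω + i√(2c)) + (1/2)L(ω - i√(2c)))`. -/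
noncomputable def sqBr (a : ℝ) (ω : ℂ) : ℂ :=
  Complex.exp ((1 / 2 : ℂ) * Lbr (ω + Complex.I * (Real.sqrt (2 * cOf a) : ℂ)) +
    (1 / 2 : ℂ) * Lbr (ω - Complex.I * (Real.sqrt (2 * cOf a) : ℂ)))

/-- `G(ω) = (ω - √(ω² + 2c))/√(2c)`. -/
noncomputable def Gbr (a : ℝ) (ω : ℂ) : ℂ :=
  (ω - sqBr a ω) / (Real.sqrt (2 * cOf a) : ℂ)

/-- The branch cuts `𝒞 = i·((-∞, -1/√(2c)] ∪ [-√(2c), √(2c)] ∪ [1/√(2c), ∞))`. -/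
def cuts (a : ℝ) : Set ℂ :=
  {z : ℂ | ∃ t : ℝ, z = Complex.I * (t : ℂ) ∧
    (t ≤ -(1 / Real.sqrt (2 * cOf a)) ∨
      (-Real.sqrt (2 * cOf a) ≤ t ∧ t ≤ Real.sqrt (2 * cOf a)) ∨
      1 / Real.sqrt (2 * cOf a) ≤ t)}

/-- The branch of the logarithm with argument in `(0, 2π]`: `L₃(z) = Log(-z) + iπ`. -/
noncomputable def L3 (z : ℂ) : ℂ := Complex.log (-z) + Complex.I * (Real.pi : ℂ)

/-- The saddle point function `g_ξ(ω) = L(ω) - ξ·L(G(ω)) + ξ·L₃(G(1/ω))`. -/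
noncomputable def gxi (a ξ : ℝ) (ω : ℂ) : ℂ :=
  Lbr ω - (ξ : ℂ) * Lbr (Gbr a ω) + (ξ : ℂ) * L3 (Gbr a ω⁻¹)

/-- The saddle point equation `1 + ξ₁·ω/√(ω²+2c) + ξ₂/(ω·√(ω⁻²+2c)) = 0`. -/
def saddleEq (a ξ₁ ξ₂ : ℝ) (ω : ℂ) : Prop :=
  1 + (ξ₁ : ℂ) * ω / sqBr a ω + (ξ₂ : ℂ) / (ω * sqBr a ω⁻¹) = 0

/-!
Write `S = sqBr a` and `h = saddleLHS a ξ`. On the right half-plane all the logarithms in `g_ξ`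
are evaluated on their slit planes, `S² = ω² + 2c` with `Re S > 0`, and `G' = -G/S`, so
`g_ξ'(ω) = h(ω)/ω` with `h(ω) = 1 + k(ω) + k(1/ω)`, `k(ω) = ξω/S(ω)`. The symmetry
`h(1/ω) = h(ω)` forces `h'(1) = 0`, hence `g_ξ''(1) = -h(1) = -g_ξ'(1)`: the two conditions
coincide, and `h(1) = 1 + 2ξ/√(1+2c)` since `S(1) = √(1+2c)`.
-/

open Complex Filter Topology
open scoped Real

lemma cOf_pos {a : ℝ} (ha : 0 < a) : 0 < cOf a := div_pos ha (by positivity)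

lemma re_inv_pos {z : ℂ} (hz : 0 < z.re) : 0 < z⁻¹.re := by
  have := normSq_pos.2 (ne_zero_of_re_pos hz)
  rw [inv_re]
  positivity

lemma neg_I_mul_mem_slitPlane {z : ℂ} (hz : 0 < z.re) : -I * z ∈ slitPlane :=
  mem_slitPlane_iff.2 <| Or.inr <| by simpa using hz.ne'

lemma exp_Lbr {z : ℂ} (hz : z ≠ 0) : exp (Lbr z) = z := by
  rw [Lbr, exp_add, exp_log (by simpa using hz), ← mul_div_assoc, mul_comm I,
    mul_div_right_comm, exp_pi_div_two_mul_I]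
  linear_combination (-z) * I_mul_I

lemma hasDerivAt_Lbr {z : ℂ} (hz : -I * z ∈ slitPlane) : HasDerivAt Lbr z⁻¹ z := by
  have hz₀ : z ≠ 0 := right_ne_zero_of_mul (slitPlane_ne_zero hz)
  refine (((hasDerivAt_id' z).const_mul (-I)).clog hz |>.add_const _).congr_deriv ?_
  field_simp

lemma hasDerivAt_L3 {z : ℂ} (hz : -z ∈ slitPlane) : HasDerivAt L3 z⁻¹ z := by
  have hz₀ : z ≠ 0 := neg_ne_zero.1 (slitPlane_ne_zero hz)
  refine (((hasDerivAt_id' z).neg).clog hz |>.add_const _).congr_deriv ?_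
  simp

lemma Lbr_im_mem_Ioo {z : ℂ} (hz : 0 < z.re) : (Lbr z).im ∈ Set.Ioo (-(π / 2)) (π / 2) := by
  have harg : arg (-I * z) < 0 := arg_neg_iff.2 (by simpa using hz)
  have him : (Lbr z).im = arg (-I * z) + π / 2 := by simp [Lbr, log_im]
  rw [him]
  constructor <;> linarith [neg_pi_lt_arg (-I * z)]

section SqrtBranch

variable {a : ℝ}

lemma sqBr_ne_zero (ω : ℂ) : sqBr a ω ≠ 0 := exp_ne_zero _

lemma re_sqBr_pos {ω : ℂ} (hω : 0 < ω.re) : 0 < (sqBr a ω).re := by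
  obtain ⟨h₁, h₂⟩ := Lbr_im_mem_Ioo (z := ω + I * √(2 * cOf a)) (by simpa using hω)
  obtain ⟨h₃, h₄⟩ := Lbr_im_mem_Ioo (z := ω - I * √(2 * cOf a)) (by simpa using hω)
  rw [sqBr, exp_re]
  set u := Lbr (ω + I * √(2 * cOf a))
  set v := Lbr (ω - I * √(2 * cOf a))
  have := Real.cos_pos_of_mem_Ioo (x := ((1 / 2 : ℂ) * u + (1 / 2 : ℂ) * v).im)
    ⟨by simp; linarith, by simp; linarith⟩
  positivity

lemma sqBr_sq_eq_mul {ω : ℂ} (hω : 0 < ω.re) :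
    sqBr a ω ^ 2 = (ω + I * √(2 * cOf a)) * (ω - I * √(2 * cOf a)) := by
  rw [sqBr, ← exp_nat_mul, Nat.cast_two, mul_add, ← mul_assoc, ← mul_assoc,
    mul_one_div_cancel two_ne_zero, one_mul, one_mul, exp_add,
    exp_Lbr (ne_zero_of_re_pos (by simpa using hω)),
    exp_Lbr (ne_zero_of_re_pos (by simpa using hω))]

lemma sqBr_sq (hc : 0 ≤ cOf a) {ω : ℂ} (hω : 0 < ω.re) :
    sqBr a ω ^ 2 = ω ^ 2 + 2 * cOf a := by
  have hr : ((√(2 * cOf a) : ℝ) : ℂ) ^ 2 = 2 * cOf a := by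
    norm_cast; rw [Real.sq_sqrt (by positivity)]
  rw [sqBr_sq_eq_mul hω]
  linear_combination hr - (√(2 * cOf a) : ℂ) ^ 2 * I_mul_I

lemma eq_ofReal_of_sq_eq {z : ℂ} {t : ℝ} (hz : 0 < z.re) (ht : 0 ≤ t) (h : z ^ 2 = t ^ 2) :
    z = t := by
  have hne : z + t ≠ 0 := ne_zero_of_re_pos (by simp; linarith)
  have : (z - t) * (z + t) = 0 := by linear_combination h
  exact sub_eq_zero.1 ((mul_eq_zero.1 this).resolve_right hne)

lemma sqBr_ofReal (hc : 0 ≤ cOf a) {x : ℝ} (hx : 0 < x) :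
    sqBr a x = √(x ^ 2 + 2 * cOf a) := by
  refine eq_ofReal_of_sq_eq (re_sqBr_pos (by simpa using hx)) (Real.sqrt_nonneg _) ?_
  rw [sqBr_sq hc (by simpa using hx)]
  norm_cast
  rw [Real.sq_sqrt (by positivity)]

lemma hasDerivAt_sqBr {ω : ℂ} (hω : 0 < ω.re) : HasDerivAt (sqBr a) (ω / sqBr a ω) ω := by
  set r : ℂ := ((√(2 * cOf a) : ℝ) : ℂ)
  have hu : 0 < (ω + I * r).re := by simpa [r] using hω
  have hv : 0 < (ω - I * r).re := by simpa [r] using hω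
  have hL₁ := (hasDerivAt_Lbr (neg_I_mul_mem_slitPlane hu)).comp ω
    ((hasDerivAt_id' ω).add_const _)
  have hL₂ := (hasDerivAt_Lbr (neg_I_mul_mem_slitPlane hv)).comp ω
    ((hasDerivAt_id' ω).sub_const _)
  refine ((hL₁.const_mul (1 / 2 : ℂ)).add (hL₂.const_mul (1 / 2 : ℂ))).cexp.congr_deriv ?_
  have hS := sqBr_ne_zero (a := a) ω
  have hprod := sqBr_sq_eq_mul (a := a) hω
  change sqBr a ω * _ = _
  field_simp [ne_zero_of_re_pos hu, ne_zero_of_re_pos hv]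
  linear_combination (2 * ω) * hprod

lemma hasDerivAt_Gbr {ω : ℂ} (hω : 0 < ω.re) :
    HasDerivAt (Gbr a) (-(Gbr a ω / sqBr a ω)) ω := by
  have hS := sqBr_ne_zero (a := a) ω
  refine (((hasDerivAt_id' ω).sub (hasDerivAt_sqBr hω)).div_const _).congr_deriv ?_
  rw [Gbr]
  field_simp
  ring

lemma Gbr_eq (hc : 0 < cOf a) {ω : ℂ} (hω : 0 < ω.re) :
    Gbr a ω = -√(2 * cOf a) / (ω + sqBr a ω) := by
  have hr : ((√(2 * cOf a) : ℝ) : ℂ) ^ 2 = 2 * cOf a := by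
    norm_cast; rw [Real.sq_sqrt (by positivity)]
  have hr₀ : ((√(2 * cOf a) : ℝ) : ℂ) ≠ 0 := by simp; positivity
  have hsum : ω + sqBr a ω ≠ 0 :=
    ne_zero_of_re_pos (by simpa using add_pos hω (re_sqBr_pos hω))
  rw [Gbr, div_eq_div_iff hr₀ hsum]
  linear_combination hr - sqBr_sq hc.le hω

lemma re_Gbr_neg (hc : 0 < cOf a) {ω : ℂ} (hω : 0 < ω.re) : (Gbr a ω).re < 0 := by
  have hsum : 0 < (ω + sqBr a ω).re := by simpa using add_pos hω (re_sqBr_pos hω)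
  have hr : 0 < √(2 * cOf a) := by positivity
  have hnorm : 0 < normSq (ω + sqBr a ω) := normSq_pos.2 (ne_zero_of_re_pos hsum)
  rw [Gbr_eq hc hω, neg_div, neg_re, div_re, ofReal_re, ofReal_im, neg_neg_iff_pos]
  simp only [zero_mul, zero_div, add_zero]
  positivity

lemma HasDerivAt.comp_Gbr {ℓ : ℂ → ℂ} (hc : 0 < cOf a) {ω : ℂ} (hω : 0 < ω.re)
    (hℓ : HasDerivAt ℓ (Gbr a ω)⁻¹ (Gbr a ω)) :
    HasDerivAt (fun w ↦ ℓ (Gbr a w)) (-(sqBr a ω)⁻¹) ω := by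
  have hG : Gbr a ω ≠ 0 := fun h ↦ (re_Gbr_neg hc hω).ne (by simp [h])
  refine (hℓ.comp ω (hasDerivAt_Gbr hω)).congr_deriv ?_
  field_simp

end SqrtBranch

noncomputable def saddleLHS (a ξ : ℝ) (ω : ℂ) : ℂ :=
  1 + (ξ : ℂ) * ω / sqBr a ω + (ξ : ℂ) / (ω * sqBr a ω⁻¹)

lemma hasDerivAt_gxi {a : ℝ} (hc : 0 < cOf a) (ξ : ℝ) {ω : ℂ} (hω : 0 < ω.re) :
    HasDerivAt (gxi a ξ) (ω⁻¹ * saddleLHS a ξ ω) ω := by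
  have hω₀ : ω ≠ 0 := ne_zero_of_re_pos hω
  have hLG : -I * Gbr a ω ∈ slitPlane :=
    mem_slitPlane_iff.2 <| Or.inr <| by simpa using (re_Gbr_neg hc hω).ne
  have hL3G : -Gbr a ω⁻¹ ∈ slitPlane :=
    mem_slitPlane_iff.2 <| Or.inl <| by simpa using re_Gbr_neg hc (re_inv_pos hω)
  have h₁ := hasDerivAt_Lbr (neg_I_mul_mem_slitPlane hω)
  have h₂ := HasDerivAt.comp_Gbr hc hω (hasDerivAt_Lbr hLG)
  have h₃ := (HasDerivAt.comp_Gbr hc (re_inv_pos hω) (hasDerivAt_L3 hL3G)).comp ω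
    (hasDerivAt_inv hω₀)
  refine ((h₁.sub (h₂.const_mul (ξ : ℂ))).add (h₃.const_mul (ξ : ℂ))).congr_deriv ?_
  have hS := sqBr_ne_zero (a := a) ω
  have hS' := sqBr_ne_zero (a := a) ω⁻¹
  rw [saddleLHS]
  field_simp
  ring

lemma differentiableAt_saddleLHS {a : ℝ} (ξ : ℝ) {ω : ℂ} (hω : 0 < ω.re) :
    DifferentiableAt ℂ (saddleLHS a ξ) ω := by
  have hω₀ : ω ≠ 0 := ne_zero_of_re_pos hω
  have hS := (hasDerivAt_sqBr (a := a) hω).differentiableAt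
  have hS' := (hasDerivAt_sqBr (a := a) (re_inv_pos hω)).differentiableAt.comp ω
    (differentiableAt_inv hω₀)
  unfold saddleLHS
  fun_prop (disch := simp [hω₀, sqBr_ne_zero])

lemma saddleLHS_inv (a ξ : ℝ) (ω : ℂ) : saddleLHS a ξ ω⁻¹ = saddleLHS a ξ ω := by
  simp only [saddleLHS, inv_inv, div_eq_mul_inv, mul_inv]
  ring

lemma saddleLHS_one {a : ℝ} (hc : 0 ≤ cOf a) (ξ : ℝ) :
    saddleLHS a ξ 1 = ((1 + 2 * ξ / √(1 + 2 * cOf a) : ℝ) : ℂ) := by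
  have h := sqBr_ofReal hc one_pos
  simp only [ofReal_one, one_pow] at h
  rw [saddleLHS, inv_one, h]
  push_cast
  ring

lemma HasDerivAt.eq_zero_of_comp_inv_eq {𝕜 F : Type*} [NontriviallyNormedField 𝕜]
    [CharZero 𝕜] [NormedAddCommGroup F] [NormedSpace 𝕜 F] {f : 𝕜 → F} {f' : F}
    (hf : HasDerivAt f f' 1) (hinv : ∀ x, f x⁻¹ = f x) : f' = 0 := by
  have hf₁ : HasDerivAt f f' (1 : 𝕜)⁻¹ := by rwa [inv_one]
  have hcomp := hf₁.scomp (1 : 𝕜) (hasDerivAt_inv one_ne_zero)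
  rw [show f ∘ (·⁻¹) = f from funext hinv] at hcomp
  have h := hf.unique hcomp
  simp only [one_pow, inv_one, neg_smul, one_smul] at h
  have h₂ : (2 : 𝕜) • f' = 0 := by rw [two_smul]; nth_rw 1 [h]; exact neg_add_cancel f'
  exact (smul_eq_zero.1 h₂).resolve_left two_ne_zero

theorem statement11_general (a : ℝ) (ha0 : 0 < a) (ξ : ℝ) :
    (deriv (gxi a ξ) 1 = 0 ∧ iteratedDeriv 2 (gxi a ξ) 1 = 0) ↔
      ξ = -(1 / 2) * Real.sqrt (1 + 2 * cOf a) := by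
  have hc := cOf_pos ha0
  have hone : (0 : ℝ) < (1 : ℂ).re := by simp
  have hderiv : deriv (gxi a ξ) =ᶠ[𝓝 1] fun ω ↦ ω⁻¹ * saddleLHS a ξ ω := by
    filter_upwards [(isOpen_lt continuous_const continuous_re).mem_nhds hone] with ω hω
    exact (hasDerivAt_gxi hc ξ hω).deriv
  have hsym : HasDerivAt (saddleLHS a ξ) 0 1 := by
    have h := (differentiableAt_saddleLHS (a := a) ξ hone).hasDerivAt
    rwa [h.eq_zero_of_comp_inv_eq (saddleLHS_inv a ξ)] at h
  have h₁ : deriv (gxi a ξ) 1 = saddleLHS a ξ 1 := by simpa using hderiv.eq_of_nhds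
  have h₂ : iteratedDeriv 2 (gxi a ξ) 1 = -saddleLHS a ξ 1 := by
    rw [iteratedDeriv_succ, iteratedDeriv_one, hderiv.deriv_eq,
      ((hasDerivAt_inv one_ne_zero).fun_mul hsym).deriv]
    simp
  have ht : 0 < √(1 + 2 * cOf a) := by positivity
  rw [h₁, h₂, neg_eq_zero, and_self, saddleLHS_one hc.le, ofReal_eq_zero]
  constructor <;> intro h <;> field_simp at * <;> linarith

/-- For every `ξ ∈ ℝ`, the function `g_ξ` has a double critical point at
`ω = 1`, i.e. `g_ξ′(1) = 0` and `g_ξ″(1) = 0`, if and only if `ξ = -(1/2)√(1+2c)`. -/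
theorem statement11 (a : ℝ) (ha0 : 0 < a) (ha1 : a < 1) (ξ : ℝ) :
    (deriv (gxi a ξ) 1 = 0 ∧ iteratedDeriv 2 (gxi a ξ) 1 = 0) ↔
      ξ = -(1 / 2) * Real.sqrt (1 + 2 * cOf a) :=
  statement11_general a ha0 ξ
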